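/- arXiv:1910.03786 — 5 statements merged into one kernel-verified Lean document; each statement's English description precedes it below -/
import Mathlib

section
/- If T > R > S > P and m ≥ 2, then (T + (m−1)P)/m is strictly less than both (⌈m/2⌉T + ⌊m/2⌋S)/m and (⌈(m−2)/2⌉S + ⌊m/2⌋T)/(m−1). -/
/-!
Both right-hand sides are averages of `T` and `S` in which `T` carries weight at least `1/m`,
so each is at least `S + (T - S)/m`. The left-hand side is `P + (T - P)/m`, the same expression
with `S` replaced by the smaller `P`.
-/

lemma div_add_sub_one_mul_div_lt {T S P m : ℝ} (hPS : P < S) (hm : 1 < m) :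
    (T + (m - 1) * P) / m < S + (T - S) / m := by
  have hm0 : 0 < m := by linarith
  rw [div_lt_iff₀ hm0, add_mul, div_mul_cancel₀ _ hm0.ne']
  nlinarith

lemma add_sub_div_le_weighted_average {T S k j d n : ℝ} (hST : S ≤ T) (hk : 1 ≤ k) (hj : 0 ≤ j)
    (hd : k + j = d) (hdn : d ≤ n) :
    S + (T - S) / n ≤ (k * T + j * S) / d := by
  have hd0 : 0 < d := by linarith
  have hTS : 0 ≤ T - S := by linarith
  have hweighted : (k * T + j * S) / d = S + k * (T - S) / d := by
    field_simp
    rw [← hd]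
    ring
  rw [hweighted, add_le_add_iff_left]
  calc (T - S) / n ≤ (T - S) / d := div_le_div_of_nonneg_left hTS hd0 hdn
    _ ≤ k * (T - S) / d := by gcongr; nlinarith

theorem stmt_3 (T R S P : ℝ) (m : ℕ) (hTR : T > R) (hRS : R > S) (hSP : S > P)
    (hm : 2 ≤ m) :
    (T + ((m : ℝ) - 1) * P) / (m : ℝ)
        < ((((m + 1) / 2 : ℕ) : ℝ) * T + ((m / 2 : ℕ) : ℝ) * S) / (m : ℝ) ∧
    (T + ((m : ℝ) - 1) * P) / (m : ℝ)
        < ((((m - 1) / 2 : ℕ) : ℝ) * S + ((m / 2 : ℕ) : ℝ) * T) / ((m : ℝ) - 1) := by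
  have hST : S ≤ T := by linarith
  have hmR : (1 : ℝ) < m := by exact_mod_cast hm
  have hlt := div_add_sub_one_mul_div_lt (T := T) hSP hmR
  have hceil : (((m + 1) / 2 : ℕ) : ℝ) + ((m / 2 : ℕ) : ℝ) = m := by
    exact_mod_cast (show (m + 1) / 2 + m / 2 = m by omega)
  have hfloor : ((m / 2 : ℕ) : ℝ) + (((m - 1) / 2 : ℕ) : ℝ) = (m : ℝ) - 1 := by
    rw [eq_sub_iff_add_eq]
    exact_mod_cast (show m / 2 + (m - 1) / 2 + 1 = m by omega)
  have hk : ∀ n : ℕ, 2 ≤ n → (1 : ℝ) ≤ ((n / 2 : ℕ) : ℝ) := fun n hn => by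
    exact_mod_cast (show 1 ≤ n / 2 by omega)
  refine ⟨hlt.trans_le ?_, hlt.trans_le ?_⟩
  · exact add_sub_div_le_weighted_average hST (hk (m + 1) (by omega)) (Nat.cast_nonneg _)
      hceil le_rfl
  · rw [add_comm (_ * S)]
    exact add_sub_div_le_weighted_average hST (hk m hm) (Nat.cast_nonneg _) hfloor (by linarith)
end

section
/- Let T > R > S > P and m ≥ 2, and let A' be the transformed repeated-snowdrift payoff matrix with a'₁₄ = m(S−P), a'₄₁ = m(T−R), zeros elsewhere in rows/columns {1,4}∩{1,4} as specified. Then the state x14 = (a'₁₄/(a'₁₄+a'₄₁), 0, 0, a'₄₁/(a'₁₄+a'₄₁)) is an evolutionarily stable state: for all y in the simplex, x14ᵀA'x14 ≥ yᵀA'x14, and whenever equality holds with y ≠ x14, x14ᵀA'y > yᵀA'y. -/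
/-!
Strategies `0` and `3` form a hawk–dove subgame with payoffs `b = A 0 3`, `c = A 3 0`, whose mixed
equilibrium is `x`. Against `x` both of them earn `b c / (b + c)` while strategies `1` and `2` earn
strictly less, so `x` is a best reply to itself and any alternative best reply lives on the edge
`{0, 3}`. On that edge the payoff difference `(x - y) ⬝ A y` equals `(b + c) (x₀ - y₀)²`.
-/

open Matrix

def Matrix.IsESS {ι : Type*} [Fintype ι] (A : Matrix ι ι ℝ) (x : ι → ℝ) : Prop :=
  (∀ y ∈ stdSimplex ℝ ι, y ⬝ᵥ A *ᵥ x ≤ x ⬝ᵥ A *ᵥ x) ∧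
    ∀ y ∈ stdSimplex ℝ ι, x ⬝ᵥ A *ᵥ x = y ⬝ᵥ A *ᵥ x → y ≠ x → y ⬝ᵥ A *ᵥ y < x ⬝ᵥ A *ᵥ y

section stdSimplex

variable {ι : Type*} [Fintype ι] {y w : ι → ℝ} {c : ℝ}

theorem dotProduct_le_of_mem_stdSimplex (hy : y ∈ stdSimplex ℝ ι) (hw : ∀ i, w i ≤ c) :
    y ⬝ᵥ w ≤ c :=
  calc y ⬝ᵥ w ≤ ∑ i, y i * c :=
        Finset.sum_le_sum fun i _ => mul_le_mul_of_nonneg_left (hw i) (hy.1 i)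
    _ = c := by rw [← Finset.sum_mul, hy.2, one_mul]

theorem eq_zero_of_dotProduct_eq_of_lt (hy : y ∈ stdSimplex ℝ ι) (hw : ∀ i, w i ≤ c)
    (heq : y ⬝ᵥ w = c) {j : ι} (hj : w j < c) : y j = 0 := by
  have hgap : ∑ i, y i * (c - w i) = 0 := by
    simp only [mul_sub, Finset.sum_sub_distrib, ← Finset.sum_mul, hy.2, one_mul]
    exact sub_eq_zero.mpr heq.symm
  have hterm := (Finset.sum_eq_zero_iff_of_nonneg fun i _ =>
    mul_nonneg (hy.1 i) (sub_nonneg.mpr (hw i))).mp hgap j (Finset.mem_univ j)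
  exact (mul_eq_zero.mp hterm).resolve_right (sub_pos.mpr hj).ne'

end stdSimplex

theorem hawkDove_payoff_gap {b c : ℝ} (hbc : b + c ≠ 0) {p q : ℝ} (hpq : p + q = 1) :
    (b / (b + c) - p) * (b * q) + (c / (b + c) - q) * (c * p)
      = (b + c) * (b / (b + c) - p) ^ 2 := by
  obtain rfl : q = 1 - p := by linarith
  field_simp
  ring

section hawkDoveFace

variable (A : Matrix (Fin 4) (Fin 4) ℝ) (h00 : A 0 0 = 0) (h33 : A 3 3 = 0)
include h00 h33

theorem lt_dotProduct_mulVec_of_hawkDove_face (hs : 0 < A 0 3 + A 3 0) {y : Fin 4 → ℝ}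
    (hy1 : y 1 = 0) (hy2 : y 2 = 0) (hy03 : y 0 + y 3 = 1)
    (hy0 : y 0 ≠ A 0 3 / (A 0 3 + A 3 0)) :
    y ⬝ᵥ A *ᵥ y < ![A 0 3 / (A 0 3 + A 3 0), 0, 0, A 3 0 / (A 0 3 + A 3 0)] ⬝ᵥ A *ᵥ y := by
  rw [← sub_pos]
  have hgap : ![A 0 3 / (A 0 3 + A 3 0), 0, 0, A 3 0 / (A 0 3 + A 3 0)] ⬝ᵥ A *ᵥ y - y ⬝ᵥ A *ᵥ y
      = (A 0 3 / (A 0 3 + A 3 0) - y 0) * (A 0 3 * y 3)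
        + (A 3 0 / (A 0 3 + A 3 0) - y 3) * (A 3 0 * y 0) := by
    simp only [dotProduct, mulVec, Fin.sum_univ_four, cons_val_zero, cons_val_one, cons_val,
      hy1, hy2, h00, h33, mul_zero, zero_mul, add_zero, zero_add]
    ring
  rw [hgap, hawkDove_payoff_gap hs.ne' hy03]
  have := sub_ne_zero.mpr hy0.symm
  positivity

theorem Matrix.isESS_of_hawkDove_face (h10 : A 1 0 = 0) (h23 : A 2 3 = 0)
    (hb : 0 < A 0 3) (hc : 0 < A 3 0) (h13 : A 1 3 < A 0 3) (h20 : A 2 0 < A 3 0) :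
    A.IsESS ![A 0 3 / (A 0 3 + A 3 0), 0, 0, A 3 0 / (A 0 3 + A 3 0)] := by
  have hs : 0 < A 0 3 + A 3 0 := add_pos hb hc
  set b := A 0 3
  set c := A 3 0
  set x : Fin 4 → ℝ := ![b / (b + c), 0, 0, c / (b + c)]
  have hAx : A *ᵥ x =
      ![b * c / (b + c), A 1 3 * c / (b + c), A 2 0 * b / (b + c), b * c / (b + c)] := by
    ext i
    fin_cases i <;>
      simp only [x, mulVec, dotProduct, Fin.sum_univ_four, Fin.zero_eta, Fin.mk_one,
        Fin.reduceFinMk, cons_val_zero, cons_val_one, cons_val, h00, h10, h23, h33, mul_zero, zero_mul, add_zero, zero_add] <;> ring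
  have hAx1 : (A *ᵥ x) 1 < b * c / (b + c) := by
    rw [hAx]
    simpa using div_lt_div_of_pos_right (mul_lt_mul_of_pos_right h13 hc) hs
  have hAx2 : (A *ᵥ x) 2 < b * c / (b + c) := by
    rw [hAx, mul_comm b c]
    simpa using div_lt_div_of_pos_right (mul_lt_mul_of_pos_right h20 hb) hs
  have hAx_le : ∀ i, (A *ᵥ x) i ≤ b * c / (b + c) := by
    intro i
    fin_cases i
    exacts [by simp [hAx], hAx1.le, hAx2.le, by simp [hAx]]
  have hxAx : x ⬝ᵥ A *ᵥ x = b * c / (b + c) := by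
    rw [hAx]
    simp only [x, dotProduct, Fin.sum_univ_four, cons_val_zero, cons_val_one, cons_val, zero_mul,
      add_zero]
    field_simp
  refine ⟨fun y hy => hxAx ▸ dotProduct_le_of_mem_stdSimplex hy hAx_le, fun y hy heq hne => ?_⟩
  have hy1 := eq_zero_of_dotProduct_eq_of_lt hy hAx_le (heq.symm.trans hxAx) hAx1
  have hy2 := eq_zero_of_dotProduct_eq_of_lt hy hAx_le (heq.symm.trans hxAx) hAx2
  have hy03 : y 0 + y 3 = 1 := by simpa [Fin.sum_univ_four, hy1, hy2] using hy.2
  refine lt_dotProduct_mulVec_of_hawkDove_face A h00 h33 hs hy1 hy2 hy03 fun hy0 => hne ?_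
  change y 0 = b / (b + c) at hy0
  have hy3 : y 3 = c / (b + c) := by
    rw [eq_sub_of_add_eq' hy03, hy0]
    field_simp
    ring
  ext i
  fin_cases i <;> simp [x, hy0, hy1, hy2, hy3]

end hawkDoveFace

theorem stmt_10_general (T R S P : ℝ) (m : ℕ) (hTR : T > R) (hSP : S > P)
    (hm : 2 ≤ m) :
    let A' : Matrix (Fin 4) (Fin 4) ℝ :=
      !![0, 0, S + ((m : ℝ) - 1) * R - m * P, (m : ℝ) * (S - P);
         0, 0, (((m + 1) / 2 : ℕ) : ℝ) * S + ((m / 2 : ℕ) : ℝ) * T - m * P, S - P;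
         T - R, (((m + 1) / 2 : ℕ) : ℝ) * T + ((m / 2 : ℕ) : ℝ) * S - m * R, 0, 0;
         (m : ℝ) * (T - R), T + ((m : ℝ) - 1) * P - m * R, 0, 0]
    let a14 := (m : ℝ) * (S - P)
    let a41 := (m : ℝ) * (T - R)
    let x14 : Fin 4 → ℝ := ![a14 / (a14 + a41), 0, 0, a41 / (a14 + a41)]
    (∀ y : Fin 4 → ℝ, (∀ i, 0 ≤ y i) → ∑ i, y i = 1 →
        y ⬝ᵥ A'.mulVec x14 ≤ x14 ⬝ᵥ A'.mulVec x14) ∧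
    (∀ y : Fin 4 → ℝ, (∀ i, 0 ≤ y i) → ∑ i, y i = 1 →
        x14 ⬝ᵥ A'.mulVec x14 = y ⬝ᵥ A'.mulVec x14 → y ≠ x14 →
        y ⬝ᵥ A'.mulVec y < x14 ⬝ᵥ A'.mulVec y) := by
  intro A' a14 a41 x14
  have hm1 : (1 : ℝ) < m := by exact_mod_cast hm
  have hSP' : 0 < S - P := sub_pos.mpr hSP
  have hTR' : 0 < T - R := sub_pos.mpr hTR
  have hess := A'.isESS_of_hawkDove_face (by simp [A']) (by simp [A']) (by simp [A'])
    (by simp [A']) (by simpa [A'] using mul_pos (by positivity) hSP') (by simpa [A'] using mul_pos (by positivity) hTR')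
    (by simpa [A'] using lt_mul_left hSP' hm1) (by simpa [A'] using lt_mul_left hTR' hm1)
  exact ⟨fun y hy hsum => hess.1 y ⟨hy, hsum⟩, fun y hy hsum => hess.2 y ⟨hy, hsum⟩⟩

theorem stmt_10 (T R S P : ℝ) (m : ℕ) (hTR : T > R) (hRS : R > S) (hSP : S > P)
    (hm : 2 ≤ m) :
    let A' : Matrix (Fin 4) (Fin 4) ℝ :=
      !![0, 0, S + ((m : ℝ) - 1) * R - m * P, (m : ℝ) * (S - P);
         0, 0, (((m + 1) / 2 : ℕ) : ℝ) * S + ((m / 2 : ℕ) : ℝ) * T - m * P, S - P;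
         T - R, (((m + 1) / 2 : ℕ) : ℝ) * T + ((m / 2 : ℕ) : ℝ) * S - m * R, 0, 0;
         (m : ℝ) * (T - R), T + ((m : ℝ) - 1) * P - m * R, 0, 0]
    let a14 := (m : ℝ) * (S - P)
    let a41 := (m : ℝ) * (T - R)
    let x14 : Fin 4 → ℝ := ![a14 / (a14 + a41), 0, 0, a41 / (a14 + a41)]
    (∀ y : Fin 4 → ℝ, (∀ i, 0 ≤ y i) → ∑ i, y i = 1 →
        y ⬝ᵥ A'.mulVec x14 ≤ x14 ⬝ᵥ A'.mulVec x14) ∧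
    (∀ y : Fin 4 → ℝ, (∀ i, 0 ≤ y i) → ∑ i, y i = 1 →
        x14 ⬝ᵥ A'.mulVec x14 = y ⬝ᵥ A'.mulVec x14 → y ≠ x14 →
        y ⬝ᵥ A'.mulVec y < x14 ⬝ᵥ A'.mulVec y) :=
  stmt_10_general T R S P m hTR hSP hm
end

section
/- Let T > R > S > P and m ≥ 2. With a'₄₂ = T+(m−1)P−mR, a'₃₂ = ⌈m/2⌉T+⌊m/2⌋S−mR, a'₄₁ = m(T−R), a'₃₁ = T−R, the quantity b₂ = −(a'₄₂−a'₃₂)/(a'₄₁−a'₃₁) is always strictly positive. -/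
/-!
Write `c = ⌈m/2⌉` and `f = ⌊m/2⌋`, so that `c + f = m` and `c, f ≥ 1`. Then the numerator
is `(c - 1)(T - P) + f(S - P)` and the denominator is `(m - 1)(T - R)`, both positive
because `T > R > S > P`.
-/

lemma neg_sub_eq_of_add_eq {T S P R c f m : ℝ} (h : c + f = m) :
    -((T + (m - 1) * P - m * R) - (c * T + f * S - m * R)) =
      (c - 1) * (T - P) + f * (S - P) := by
  rw [← h]; ring

lemma sub_one_mul_add_mul_pos {T S P c f : ℝ} (hTP : P < T) (hSP : P < S) (hc : 1 ≤ c)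
    (hf : 1 ≤ f) : 0 < (c - 1) * (T - P) + f * (S - P) :=
  add_pos_of_nonneg_of_pos (mul_nonneg (sub_nonneg.2 hc) (sub_pos.2 hTP).le)
    (mul_pos (by linarith) (sub_pos.2 hSP))

theorem stmt_15 (T R S P : ℝ) (m : ℕ) (hTR : T > R) (hRS : R > S) (hSP : S > P)
    (hm : 2 ≤ m) :
    -((T + ((m : ℝ) - 1) * P - m * R)
        - ((((m + 1) / 2 : ℕ) : ℝ) * T + ((m / 2 : ℕ) : ℝ) * S - m * R))
      / (((m : ℝ) * (T - R)) - (T - R)) > 0 := by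
  have hsum : (((m + 1) / 2 : ℕ) : ℝ) + ((m / 2 : ℕ) : ℝ) = m := by
    exact_mod_cast (by omega : (m + 1) / 2 + m / 2 = m)
  have hceil : (1 : ℝ) ≤ (((m + 1) / 2 : ℕ) : ℝ) := by exact_mod_cast (by omega : 1 ≤ (m + 1) / 2)
  have hfloor : (1 : ℝ) ≤ ((m / 2 : ℕ) : ℝ) := by exact_mod_cast (by omega : 1 ≤ m / 2)
  have hm' : (1 : ℝ) < m := by exact_mod_cast hm
  rw [neg_sub_eq_of_add_eq hsum, ← sub_one_mul]
  exact div_pos (sub_one_mul_add_mul_pos (by linarith) hSP hceil hfloor)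
    (mul_pos (sub_pos.2 hm') (sub_pos.2 hTR))
end

section
/- Let T > R > S > P and m ≥ 2. Then the difference of average cooperation levels satisfies x23_C − x14_C = (T−S)/(2(T−R+S−P)) > 0 when m is even, and ((m−1)(T−S))/(2m(T−R+S−P)) > 0 when m is odd. -/
/-!
With the weights `w₂ = (⌈m/2⌉S + ⌊m/2⌋T - mP)/(mD)` and `w₃ = (⌈m/2⌉T + ⌊m/2⌋S - mR)/(mD)`,
`D = T + S - P - R`, one has `w₂ + w₃ = 1` because `⌈m/2⌉ + ⌊m/2⌋ = m`, so the cooperation level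
`w₂² + w₂w₃` at the TFT/STFT equilibrium is just `w₂`. Subtracting `(S - P)/D` leaves
`⌊m/2⌋(T - S)/(mD)`, which is positive as soon as `m ≥ 2` and equals the stated closed forms
once `⌊m/2⌋` is written as `m/2` or `(m - 1)/2`.
-/

theorem Nat.succ_div_two_add_div_two (m : ℕ) : (m + 1) / 2 + m / 2 = m := by omega

theorem Nat.cast_div_two_of_even {m : ℕ} (hm : Even m) : ((m / 2 : ℕ) : ℝ) = m / 2 := by
  obtain ⟨k, rfl⟩ := hm
  rw [show (k + k) / 2 = k by omega]
  push_cast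
  ring

theorem Nat.cast_div_two_of_odd {m : ℕ} (hm : Odd m) : ((m / 2 : ℕ) : ℝ) = (m - 1) / 2 := by
  obtain ⟨k, rfl⟩ := hm
  rw [show (2 * k + 1) / 2 = k by omega]
  push_cast
  ring

section MixtureWeights

variable {T R S P a b m : ℝ}

theorem mixture_weights_add_eq_one (hab : a + b = m) (hm : m ≠ 0) (hD : T + S - P - R ≠ 0) :
    (a * S + b * T - m * P) / (m * (T + S - P - R))
      + (a * T + b * S - m * R) / (m * (T + S - P - R)) = 1 := by
  rw [← add_div, div_eq_one_iff_eq (mul_ne_zero hm hD)]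
  linear_combination (S + T) * hab

theorem mixture_weight_sub_eq (hab : a + b = m) (hm : m ≠ 0) (hD : T + S - P - R ≠ 0) :
    (a * S + b * T - m * P) / (m * (T + S - P - R)) - (S - P) / (S - P + T - R)
      = b * (T - S) / (m * (T + S - P - R)) := by
  subst hab
  rw [show S - P + T - R = T + S - P - R by ring]
  field_simp
  ring

end MixtureWeights

theorem mixture_cooperation_eq {u v c : ℝ} (huv : u + v = 1) (hc : c ≠ 0) :
    u * u * ((2 * c) / (2 * c)) + u * v * (c / (2 * c)) + v * u * (c / (2 * c))
      + v * v * (0 / (2 * c)) = u := by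
  rw [div_self (by positivity), show c / (2 * c) = 1 / 2 by field_simp, zero_div]
  linear_combination u * huv

theorem stmt_17 (T R S P : ℝ) (m : ℕ) (hTR : T > R) (hRS : R > S) (hSP : S > P)
    (hm : 2 ≤ m) :
    let x14C : ℝ := (S - P) / (S - P + T - R)
    let w2 : ℝ := ((((m + 1) / 2 : ℕ) : ℝ) * S + ((m / 2 : ℕ) : ℝ) * T - m * P)
                    / ((m : ℝ) * (T + S - P - R))
    let w3 : ℝ := ((((m + 1) / 2 : ℕ) : ℝ) * T + ((m / 2 : ℕ) : ℝ) * S - m * R)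
                    / ((m : ℝ) * (T + S - P - R))
    let x23C : ℝ := w2 * w2 * ((2 * (m : ℝ)) / (2 * (m : ℝ)))
                    + w2 * w3 * ((m : ℝ) / (2 * (m : ℝ)))
                    + w3 * w2 * ((m : ℝ) / (2 * (m : ℝ)))
                    + w3 * w3 * (0 / (2 * (m : ℝ)))
    (Even m → x23C - x14C = (T - S) / (2 * (T - R + S - P)) ∧ x23C - x14C > 0) ∧
    (Odd m → x23C - x14C = ((m : ℝ) - 1) * (T - S) / (2 * m * (T - R + S - P)) ∧
      x23C - x14C > 0) := by
  intro x14C w2 w3 x23C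
  have hD : T + S - P - R > 0 := by linarith
  have hm0 : (m : ℝ) > 0 := by positivity
  have hab : (((m + 1) / 2 : ℕ) : ℝ) + ((m / 2 : ℕ) : ℝ) = m := by
    exact_mod_cast Nat.succ_div_two_add_div_two m
  have hx : x23C = w2 :=
    mixture_cooperation_eq (mixture_weights_add_eq_one hab hm0.ne' hD.ne') hm0.ne'
  have hdiff : x23C - x14C = ((m / 2 : ℕ) : ℝ) * (T - S) / (m * (T + S - P - R)) := by
    rw [hx]
    exact mixture_weight_sub_eq hab hm0.ne' hD.ne'
  have hpos : x23C - x14C > 0 := by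
    have : (1 : ℝ) ≤ ((m / 2 : ℕ) : ℝ) := by exact_mod_cast (show 1 ≤ m / 2 by omega)
    rw [hdiff]
    exact div_pos (mul_pos (by linarith) (by linarith)) (by positivity)
  refine ⟨fun he => ⟨?_, hpos⟩, fun ho => ⟨?_, hpos⟩⟩
  · rw [hdiff, Nat.cast_div_two_of_even he, show T - R + S - P = T + S - P - R by ring]
    field_simp
  · rw [hdiff, Nat.cast_div_two_of_odd ho, show T - R + S - P = T + S - P - R by ring]
    field_simp
end

section
/- Let T > R > S > P and m ≥ 2. No point of the edge X34 = {(0,0,α,1−α) : α ∈ [0,1]} is a symmetric Nash equilibrium of the transformed payoff matrix A': for every x ∈ X34 there exists y in the simplex with yᵀA'x > xᵀA'x. -/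
open Matrix

/-!
A point `x = (0, 0, α, 1 - α)` of the edge earns `xᵀA'x = 0` against itself, because the lower-right
`2 × 2` block of `A'` vanishes. The first pure strategy earns `α a'₁₃ + (1 - α) a'₁₄` against it, a
convex combination of `a'₁₃ = (S - P) + (m - 1)(R - P) > 0` and `a'₁₄ = m(S - P) > 0`, so it is a
strictly better reply.
-/

theorem exists_simplex_better_reply_of_lt {ι : Type*} [Fintype ι] [DecidableEq ι]
    (A : Matrix ι ι ℝ) (x : ι → ℝ) (i : ι) (h : x ⬝ᵥ A *ᵥ x < (A *ᵥ x) i) :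
    ∃ y : ι → ℝ, (∀ j, 0 ≤ y j) ∧ ∑ j, y j = 1 ∧ y ⬝ᵥ A *ᵥ x > x ⬝ᵥ A *ᵥ x :=
  ⟨Pi.single i 1, fun j => by rcases eq_or_ne j i with rfl | hj <;> simp [*], by simp,
    by rwa [single_one_dotProduct]⟩

theorem snowdrift_coeff_pos {R S P : ℝ} {m : ℕ} (hRS : R > S) (hSP : S > P) (hm : 1 ≤ m) :
    0 < S + ((m : ℝ) - 1) * R - m * P := by
  have hm' : (1 : ℝ) ≤ m := by exact_mod_cast hm
  nlinarith

theorem stmt_19_general (T R S P : ℝ) (m : ℕ) (hRS : R > S) (hSP : S > P)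
    (hm : 2 ≤ m) :
    let A' : Matrix (Fin 4) (Fin 4) ℝ :=
      !![0, 0, S + ((m : ℝ) - 1) * R - m * P, (m : ℝ) * (S - P);
         0, 0, (((m + 1) / 2 : ℕ) : ℝ) * S + ((m / 2 : ℕ) : ℝ) * T - m * P, S - P;
         T - R, (((m + 1) / 2 : ℕ) : ℝ) * T + ((m / 2 : ℕ) : ℝ) * S - m * R, 0, 0;
         (m : ℝ) * (T - R), T + ((m : ℝ) - 1) * P - m * R, 0, 0]
    ∀ α : ℝ, α ∈ Set.Icc (0 : ℝ) 1 →
      ∃ y : Fin 4 → ℝ, (∀ i, 0 ≤ y i) ∧ ∑ i, y i = 1 ∧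
        y ⬝ᵥ A'.mulVec ![0, 0, α, 1 - α] > ![0, 0, α, 1 - α] ⬝ᵥ A'.mulVec ![0, 0, α, 1 - α] := by
  intro A' α ⟨hα0, hα1⟩
  apply exists_simplex_better_reply_of_lt A' _ 0
  have hm0 : (0 : ℝ) < m := by exact_mod_cast (by omega : 0 < m)
  have hpos : 0 < α * (S + ((m : ℝ) - 1) * R - m * P) + (1 - α) * ((m : ℝ) * (S - P)) :=
    convex_Ioi 0 (snowdrift_coeff_pos hRS hSP (by omega)) (mul_pos hm0 (sub_pos.2 hSP))
      hα0 (sub_nonneg.2 hα1) (by ring)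
  simp only [A', dotProduct, mulVec, of_apply, cons_val', cons_val_fin_one, Fin.sum_univ_four,
    cons_val_zero, cons_val_one, cons_val, mul_zero, zero_mul, add_zero, zero_add]
  linarith

theorem stmt_19 (T R S P : ℝ) (m : ℕ) (hTR : T > R) (hRS : R > S) (hSP : S > P)
    (hm : 2 ≤ m) :
    let A' : Matrix (Fin 4) (Fin 4) ℝ :=
      !![0, 0, S + ((m : ℝ) - 1) * R - m * P, (m : ℝ) * (S - P);
         0, 0, (((m + 1) / 2 : ℕ) : ℝ) * S + ((m / 2 : ℕ) : ℝ) * T - m * P, S - P;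
         T - R, (((m + 1) / 2 : ℕ) : ℝ) * T + ((m / 2 : ℕ) : ℝ) * S - m * R, 0, 0;
         (m : ℝ) * (T - R), T + ((m : ℝ) - 1) * P - m * R, 0, 0]
    ∀ α : ℝ, α ∈ Set.Icc (0 : ℝ) 1 →
      ∃ y : Fin 4 → ℝ, (∀ i, 0 ≤ y i) ∧ ∑ i, y i = 1 ∧
        y ⬝ᵥ A'.mulVec ![0, 0, α, 1 - α] > ![0, 0, α, 1 - α] ⬝ᵥ A'.mulVec ![0, 0, α, 1 - α] :=
  stmt_19_general T R S P m hRS hSP hm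
end
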